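/- arXiv:1807.03243 — 2 statements merged into one kernel-verified Lean document; each statement's English description precedes it below -/
import Mathlib

section
/- Let G be a finite group and H, H₁ two subgroups. Then H and H₁ are quasi-conjugate (i.e., for every conjugacy class C of G, #(C ∩ H) = #(C ∩ H₁)) if and only if the induced representations Ind_H^G 1_H and Ind_{H₁}^G 1_{H₁} (equivalently, the permutation representations of G on G/H and on G/H₁) have equal characters. -/
set_option linter.unusedSectionVars false
set_option linter.unnecessarySimpa false

section Aux
variable {G : Type*} [Group G] [Finite G]

private lemma mk_out' {H : Subgroup G} (q : G ⧸ H) :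
    (QuotientGroup.mk q.out : G ⧸ H) = q := q.out_eq

private lemma cmk_out (c : ConjClasses G) : ConjClasses.mk c.out = c := c.out_eq

private lemma fixed_iff {H : Subgroup G} (g x : G) :
    g • (QuotientGroup.mk x : G ⧸ H) = QuotientGroup.mk x ↔ x⁻¹ * g * x ∈ H := by
  show (QuotientGroup.mk (g * x) : G ⧸ H) = QuotientGroup.mk x ↔ _
  rw [QuotientGroup.eq]
  constructor
  · intro h
    have := H.inv_mem h
    simpa [mul_assoc] using this
  · intro h
    have := H.inv_mem h
    simpa [mul_assoc] using this

/-- Key counting: fix(g on G/H) * |H| = |C_G(g)| * |class(g) ∩ H|. -/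
private lemma fix_mul_card (H : Subgroup G) (g : G) :
    Nat.card {x : G ⧸ H // g • x = x} * Nat.card H
      = Nat.card (Subgroup.centralizer ({g} : Set G)) *
        Nat.card ({x : G | IsConj g x} ∩ (H : Set G) : Set G) := by
  have e1 : ({q : G ⧸ H // g • q = q} × H) ≃ {x : G | x⁻¹ * g * x ∈ H} := by
    refine Equiv.ofBijective (fun p => ⟨p.1.1.out * p.2.1, ?_⟩) ⟨?_, ?_⟩
    · have hfix : g • (QuotientGroup.mk p.1.1.out : G ⧸ H) = QuotientGroup.mk p.1.1.out := by
        rw [mk_out']; exact p.1.2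
      have h3 : p.1.1.out⁻¹ * g * p.1.1.out ∈ H := (fixed_iff g _).mp hfix
      show (p.1.1.out * p.2.1)⁻¹ * g * (p.1.1.out * p.2.1) ∈ H
      have heq : (p.1.1.out * p.2.1)⁻¹ * g * (p.1.1.out * p.2.1)
          = p.2.1⁻¹ * (p.1.1.out⁻¹ * g * p.1.1.out) * p.2.1 := by group
      rw [heq]
      exact H.mul_mem (H.mul_mem (H.inv_mem p.2.2) h3) p.2.2
    · rintro p p' heq
      simp only [Subtype.mk.injEq] at heq
      have hm : (QuotientGroup.mk (p.1.1.out * p.2.1) : G ⧸ H) = QuotientGroup.mk p.1.1.out := by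
        rw [QuotientGroup.eq]
        have := H.inv_mem p.2.2
        simpa [mul_assoc] using this
      have hm' : (QuotientGroup.mk (p'.1.1.out * p'.2.1) : G ⧸ H)
          = QuotientGroup.mk p'.1.1.out := by
        rw [QuotientGroup.eq]
        have := H.inv_mem p'.2.2
        simpa [mul_assoc] using this
      have hqq : p.1.1 = p'.1.1 := by
        rw [← mk_out' p.1.1, ← mk_out' p'.1.1, ← hm, ← hm', heq]
      have h1 : p.1 = p'.1 := Subtype.ext hqq
      have h2 : p.2 = p'.2 := by
        apply Subtype.ext
        apply mul_left_cancel (a := p.1.1.out)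
        rw [heq, hqq]
      exact Prod.ext h1 h2
    · rintro ⟨x, hx⟩
      have hfix : g • (QuotientGroup.mk x : G ⧸ H) = QuotientGroup.mk x := (fixed_iff g x).mpr hx
      set q : G ⧸ H := QuotientGroup.mk x with hqdef
      have hmem : q.out⁻¹ * x ∈ H := QuotientGroup.eq.mp (mk_out' q)
      refine ⟨⟨⟨q, by rw [hqdef]; exact hfix⟩, ⟨q.out⁻¹ * x, hmem⟩⟩, ?_⟩
      simp
  have e2 : ((Subgroup.centralizer ({g} : Set G)) ×
      ({x : G | IsConj g x} ∩ (H : Set G) : Set G)) ≃ {x : G | x⁻¹ * g * x ∈ H} := by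
    have wspec : ∀ y : ({x : G | IsConj g x} ∩ (H : Set G) : Set G),
        ∃ w : G, w * g * w⁻¹ = y.1 := fun y => isConj_iff.mp y.2.1
    choose w hw using wspec
    have hcv : ∀ (c : Subgroup.centralizer ({g} : Set G))
        (y : ({x : G | IsConj g x} ∩ (H : Set G) : Set G)),
        (c.1 * (w y)⁻¹)⁻¹ * g * (c.1 * (w y)⁻¹) = y.1 := by
      intro c y
      have hc : c.1 * g = g * c.1 := Subgroup.mem_centralizer_singleton_iff.mp c.2
      have h1 : (c.1 * (w y)⁻¹)⁻¹ * g * (c.1 * (w y)⁻¹)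
          = (w y) * (c.1⁻¹ * g * c.1) * (w y)⁻¹ := by group
      have hg : c.1⁻¹ * g * c.1 = g := by
        rw [mul_assoc, ← hc, ← mul_assoc, inv_mul_cancel, one_mul]
      rw [h1, hg, hw y]
    refine Equiv.ofBijective (fun p => ⟨p.1.1 * (w p.2)⁻¹, ?_⟩) ⟨?_, ?_⟩
    · show (p.1.1 * (w p.2)⁻¹)⁻¹ * g * (p.1.1 * (w p.2)⁻¹) ∈ H
      rw [hcv p.1 p.2]
      exact p.2.2.2
    · rintro p p' heq
      simp only [Subtype.mk.injEq] at heq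
      have hy : p.2 = p'.2 := by
        apply Subtype.ext
        rw [← hcv p.1 p.2, ← hcv p'.1 p'.2, heq]
      have hc : p.1 = p'.1 := by
        apply Subtype.ext
        apply mul_right_cancel (b := (w p.2)⁻¹)
        rw [heq, hy]
      exact Prod.ext hc hy
    · rintro ⟨x, hx⟩
      have hyc : IsConj g (x⁻¹ * g * x) := isConj_iff.mpr ⟨x⁻¹, by group⟩
      set y : ({x : G | IsConj g x} ∩ (H : Set G) : Set G) := ⟨x⁻¹ * g * x, hyc, hx⟩ with hy
      have hcent : x * w y ∈ Subgroup.centralizer ({g} : Set G) := by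
        rw [Subgroup.mem_centralizer_singleton_iff]
        have h1 : w y * g * (w y)⁻¹ = x⁻¹ * g * x := hw y
        calc x * w y * g = x * (x⁻¹ * g * x) * w y := by
              rw [← h1]; group
          _ = g * (x * w y) := by group
      refine ⟨⟨⟨x * w y, hcent⟩, y⟩, ?_⟩
      apply Subtype.ext
      show x * w y * (w y)⁻¹ = x
      group
  rw [← Nat.card_prod, ← Nat.card_prod, Nat.card_congr e1, Nat.card_congr e2]

private lemma card_subgroup_eq_sum [Fintype (ConjClasses G)] (H : Subgroup G) :
    Nat.card H = ∑ c : ConjClasses G,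
      Nat.card ({x : G | IsConj c.out x} ∩ (H : Set G) : Set G) := by
  haveI : ∀ c : ConjClasses G, Fintype ({x : G | IsConj c.out x} ∩ (H : Set G) : Set G) :=
    fun c => Fintype.ofFinite _
  have e : H ≃ Σ c : ConjClasses G, ({x : G | IsConj c.out x} ∩ (H : Set G) : Set G) := by
    refine Equiv.ofBijective
      (fun h => ⟨ConjClasses.mk h.1, ⟨h.1, ?_, h.2⟩⟩) ⟨?_, ?_⟩
    · show IsConj (ConjClasses.mk h.1).out h.1
      rw [← ConjClasses.mk_eq_mk_iff_isConj, cmk_out]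
    · rintro a b heq
      exact Subtype.ext (congrArg (fun p => (p.2 : G)) heq)
    · rintro ⟨c, ⟨x, hx1, hx2⟩⟩
      refine ⟨⟨x, hx2⟩, ?_⟩
      have hc : ConjClasses.mk x = c := by
        rw [← cmk_out c, ConjClasses.mk_eq_mk_iff_isConj]
        exact hx1.symm
      subst hc
      rfl
  rw [Nat.card_congr e, Nat.card_eq_fintype_card, Fintype.card_sigma]
  exact Finset.sum_congr rfl fun c _ => (Nat.card_eq_fintype_card).symm

end Aux

/-- Two subgroups `H`, `H₁` of a finite group `G` are quasi-conjugate (every conjugacy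
class of `G` meets them in equally many elements) iff the permutation representations of
`G` on `G ⧸ H` and `G ⧸ H₁` have equal characters, i.e. every `g ∈ G` fixes the same
number of cosets of `H` as of `H₁`. -/
theorem quasiConjugate_iff_perm_characters_eq (G : Type*) [Group G] [Finite G]
    (H H₁ : Subgroup G) :
    (∀ g : G, Nat.card ({x : G | IsConj g x} ∩ (H : Set G) : Set G)
      = Nat.card ({x : G | IsConj g x} ∩ (H₁ : Set G) : Set G)) ↔
    (∀ g : G, Nat.card {x : G ⧸ H // g • x = x} = Nat.card {x : G ⧸ H₁ // g • x = x}) := by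
  constructor
  · intro hqc g
    have hcard : Nat.card H = Nat.card H₁ := by
      haveI : Fintype (ConjClasses G) := Fintype.ofFinite _
      rw [card_subgroup_eq_sum, card_subgroup_eq_sum]
      exact Finset.sum_congr rfl fun c _ => hqc c.out
    have h1 := fix_mul_card H g
    have h2 := fix_mul_card H₁ g
    rw [hqc g, ← h2, hcard] at h1
    have hpos : 0 < Nat.card H₁ := Nat.card_pos
    exact Nat.eq_of_mul_eq_mul_right hpos h1
  · intro hfix g
    have hcard : Nat.card H = Nat.card H₁ := by
      have h1 := hfix 1
      have e : ∀ (K : Subgroup G), Nat.card {x : G ⧸ K // (1 : G) • x = x} = Nat.card (G ⧸ K) :=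
        fun K => Nat.card_congr (Equiv.subtypeUnivEquiv (by simp))
      rw [e H, e H₁] at h1
      have hG := Subgroup.card_eq_card_quotient_mul_card_subgroup H
      rw [Subgroup.card_eq_card_quotient_mul_card_subgroup H₁, h1] at hG
      have hpos : 0 < Nat.card (G ⧸ H₁) := Nat.card_pos
      exact Nat.eq_of_mul_eq_mul_left hpos hG.symm
    have h1 := fix_mul_card H g
    have h2 := fix_mul_card H₁ g
    rw [hfix g, hcard, h2] at h1
    have hpos : 0 < Nat.card (Subgroup.centralizer ({g} : Set G)) := Nat.card_pos
    exact Nat.eq_of_mul_eq_mul_left hpos h1.symm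
end

section
/- Every subgroup of order 12 of PSL(2, F₇) is isomorphic to the alternating group A₄. -/
/-!
A group of order 12 has one or four Sylow 3-subgroups. If it has just one, `P`, the centralizer
of `P` has index dividing `|Aut P| = 2`, so it contains an involution commuting with an element
of order 3, and their product has order 6; but no element of `PSL(2, 7)` has order 6. So a
subgroup of order 12 of `PSL(2, 7)` has four Sylow 3-subgroups. They are self-normalizing of
prime order, hence intersect trivially, so the conjugation action on them is faithful and embeds
the subgroup into `S₄` with index 2, i.e. onto `A₄`.
-/

open Equiv
open scoped MatrixGroups

theorem nonempty_mulEquiv_alternatingGroup_of_injective {G α : Type*} [Group G] [Fintype α]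
    [DecidableEq α] (f : G →* Perm α) (hf : Function.Injective f)
    (hG : 2 * Nat.card G = Nat.card (Perm α)) : Nonempty (G ≃* alternatingGroup α) := by
  have := Finite.of_injective f hf
  have hcard : Nat.card f.range = Nat.card G := Nat.card_congr (f.ofInjective hf).toEquiv.symm
  have hindex : f.range.index = 2 := by
    have := f.range.card_mul_index
    rw [hcard, ← hG, mul_comm] at this
    exact Nat.eq_of_mul_eq_mul_right Nat.card_pos this
  exact ⟨(f.ofInjective hf).trans
    (MulEquiv.subgroupCongr (Perm.eq_alternatingGroup_of_index_eq_two hindex))⟩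

theorem exists_orderOf_eq_six_of_normal_of_card_eq_three {G : Type*} [Group G] [Finite G]
    (hG : 4 ∣ Nat.card G) (P : Subgroup G) [P.Normal] (hP : Nat.card P = 3) :
    ∃ g : G, orderOf g = 6 := by
  obtain ⟨x, hx⟩ := exists_prime_orderOf_dvd_card' 3 hP.symm.dvd
  have hAut : Nat.card (MulAut P) = 2 := by
    have := isCyclic_of_prime_card hP
    rw [IsCyclic.card_mulAut, hP]; rfl
  -- The kernel of `conjNormal` is the centralizer of `P`; its index divides `|Aut P| = 2`.
  have hker : 2 ∣ Nat.card (MulAut.conjNormal (H := P)).ker := by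
    have hindex : (MulAut.conjNormal (H := P)).ker.index ∣ 2 := by
      rw [Subgroup.index_ker, ← hAut]
      exact Subgroup.card_subgroup_dvd_card _
    have hmul := (MulAut.conjNormal (H := P)).ker.card_mul_index
    rcases (Nat.dvd_prime Nat.prime_two).mp hindex with h | h <;> rw [h] at hmul <;> omega
  obtain ⟨y, hy⟩ := exists_prime_orderOf_dvd_card' 2 hker
  rw [← Subgroup.orderOf_coe] at hx hy
  have hcomm : Commute (y : G) x := by
    have := congrArg (fun φ : MulAut P => (φ x : G)) y.2
    simpa [MulAut.conjNormal_apply, Commute, SemiconjBy, mul_inv_eq_iff_eq_mul] using this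
  refine ⟨y * x, ?_⟩
  rw [hcomm.orderOf_mul_eq_mul_orderOf_of_coprime (by rw [hx, hy]; norm_num), hx, hy]

theorem card_sylow_three_of_card_eq_twelve {G : Type*} [Group G] [Finite G]
    (hG : Nat.card G = 12) (P : Sylow 3 G) : Nat.card P = 3 := by
  rw [P.card_eq_multiplicity, hG, Nat.factorization_def _ Nat.prime_three,
    show 12 = 3 * 4 from rfl, padicValNat.mul (by norm_num) (by norm_num), padicValNat_self,
    padicValNat.eq_zero_of_not_dvd (by norm_num)]
  rfl

theorem card_sylow_three_eq_one_or_four {G : Type*} [Group G] [Finite G] (hG : Nat.card G = 12) :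
    Nat.card (Sylow 3 G) = 1 ∨ Nat.card (Sylow 3 G) = 4 := by
  obtain ⟨P⟩ : Nonempty (Sylow 3 G) := inferInstance
  have hP := card_sylow_three_of_card_eq_twelve hG P
  have hindex : (P : Subgroup G).index = 4 := by
    have := (P : Subgroup G).card_mul_index
    rw [hP, hG] at this
    omega
  have hdvd : Nat.card (Sylow 3 G) ∣ 4 := hindex ▸ P.card_dvd_index
  have hmod : Nat.card (Sylow 3 G) % 3 = 1 := card_sylow_modEq_one 3 G
  have hle := Nat.le_of_dvd (by norm_num) hdvd
  interval_cases Nat.card (Sylow 3 G) <;> simp_all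

theorem Subgroup.zpowers_eq_of_card_eq_prime {G : Type*} [Group G] {p : ℕ} [hp : Fact p.Prime]
    {H : Subgroup G} (hH : Nat.card H = p) {g : G} (hg : g ∈ H) (hg1 : g ≠ 1) :
    Subgroup.zpowers g = H := by
  have hdvd : orderOf g ∣ p := hH ▸ H.orderOf_dvd_natCard hg
  have horder : orderOf g = p := (Nat.dvd_prime hp.out).mp hdvd |>.resolve_left (by simpa)
  have : Finite H := Nat.finite_of_card_ne_zero (hH ▸ hp.out.ne_zero)
  exact Subgroup.eq_of_le_of_card_ge (Subgroup.zpowers_le.mpr hg)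
    (by rw [hH, Nat.card_zpowers, horder])

theorem injective_toPermHom_sylow_of_card_eq_mul {G : Type*} [Group G] [Finite G] {p : ℕ}
    [Fact p.Prime] (hG : Nat.card G = p * Nat.card (Sylow p G)) (hn : 1 < Nat.card (Sylow p G)) :
    Function.Injective (MulAction.toPermHom G (Sylow p G)) := by
  have hself : ∀ P : Sylow p G, Subgroup.normalizer (P : Set G) = P ∧ Nat.card P = p := by
    intro P
    have hN : Nat.card (Subgroup.normalizer (P : Set G)) = p := by
      have := (Subgroup.normalizer (P : Set G)).card_mul_index
      rw [← P.card_eq_index_normalizer, hG] at this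
      exact Nat.eq_of_mul_eq_mul_right Nat.card_pos this
    have hle : p ≤ Nat.card P :=
      Nat.le_of_dvd Nat.card_pos (P.dvd_card_of_dvd_card (hG ▸ dvd_mul_right _ _))
    have heq : Subgroup.normalizer (P : Set G) = P :=
      (Subgroup.eq_of_le_of_card_ge Subgroup.le_normalizer (hN.trans_le hle)).symm
    rw [heq] at hN
    exact ⟨heq, hN⟩
  rw [injective_iff_map_eq_one]
  intro g hg
  have hmem : ∀ P : Sylow p G, g ∈ (P : Subgroup G) := fun P => by
    rw [← (hself P).1]
    exact Sylow.smul_eq_iff_mem_normalizer.mp (congrArg (· P) hg)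
  by_contra hg1
  obtain ⟨P, Q, hPQ⟩ := Finite.one_lt_card_iff_nontrivial.mp hn
  refine hPQ (Sylow.ext ?_)
  rw [← Subgroup.zpowers_eq_of_card_eq_prime (hself P).2 (hmem P) hg1,
    Subgroup.zpowers_eq_of_card_eq_prime (hself Q).2 (hmem Q) hg1]

theorem nonempty_mulEquiv_alternatingGroup_of_card_eq_twelve {G : Type*} [Group G]
    (hG : Nat.card G = 12) (h6 : ∀ g : G, orderOf g ≠ 6) :
    Nonempty (G ≃* alternatingGroup (Fin 4)) := by
  have : Finite G := Nat.finite_of_card_ne_zero (by omega)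
  rcases card_sylow_three_eq_one_or_four hG with h1 | h4
  · have : Subsingleton (Sylow 3 G) := (Nat.card_eq_one_iff_unique.mp h1).1
    obtain ⟨P⟩ : Nonempty (Sylow 3 G) := inferInstance
    have := P.normal_of_subsingleton
    obtain ⟨g, hg⟩ := exists_orderOf_eq_six_of_normal_of_card_eq_three (G := G)
      (by norm_num [hG]) P (card_sylow_three_of_card_eq_twelve hG P)
    exact absurd hg (h6 g)
  · have hf := injective_toPermHom_sylow_of_card_eq_mul (G := G) (p := 3)
      (by rw [hG, h4]) (by omega)
    obtain ⟨e⟩ : Nonempty (Sylow 3 G ≃ Fin 4) := ⟨Finite.equivFinOfCardEq h4⟩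
    exact nonempty_mulEquiv_alternatingGroup_of_injective
      (e.permCongrHom.toMonoidHom.comp (MulAction.toPermHom G (Sylow 3 G)))
      (e.permCongrHom.injective.comp hf) (by rw [hG, Nat.card_perm, Nat.card_fin]; rfl)

theorem Matrix.SpecialLinearGroup.mem_center_iff_eq_one_or_eq_neg_one {R : Type*} [CommRing R]
    [NoZeroDivisors R] {A : SL(2, R)} : A ∈ Subgroup.center SL(2, R) ↔ A = 1 ∨ A = -1 := by
  have hneg : Matrix.scalar (Fin 2) (-1 : R) = ((-1 : SL(2, R)) : Matrix (Fin 2) (Fin 2) R) := by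
    simp only [map_neg, map_one, SpecialLinearGroup.coe_neg, SpecialLinearGroup.coe_one]
  rw [SpecialLinearGroup.mem_center_iff]
  constructor
  · rintro ⟨r, hr, hA⟩
    obtain rfl | rfl : r = 1 ∨ r = -1 := by simpa using hr
    · exact Or.inl (Subtype.ext (by simp [← hA]))
    · exact Or.inr (Subtype.ext (hA.symm.trans hneg))
  · rintro (rfl | rfl)
    · exact ⟨1, by simp, by simp⟩
    · exact ⟨-1, by simp, hneg⟩

theorem Matrix.ProjectiveSpecialLinearGroup.mk_pow_eq_one_iff {R : Type*} [CommRing R]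
    [NoZeroDivisors R] (A : SL(2, R)) (k : ℕ) :
    (A : PSL(2, R)) ^ k = 1 ↔ A ^ k = 1 ∨ A ^ k = -1 := by
  rw [← QuotientGroup.mk_pow, QuotientGroup.eq_one_iff,
    SpecialLinearGroup.mem_center_iff_eq_one_or_eq_neg_one]

-- The element orders in `PSL(2, 7)` are 1, 2, 3, 4 and 7; this is checked on the 336 elements
-- of `SL(2, 7)`.
set_option maxRecDepth 10000 in
theorem sl27_pow_two_or_pow_three_eq_one_or_neg_one_of_pow_six :
    ∀ A : SL(2, ZMod 7), A ^ 6 = 1 ∨ A ^ 6 = -1 →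
      (A ^ 2 = 1 ∨ A ^ 2 = -1) ∨ (A ^ 3 = 1 ∨ A ^ 3 = -1) := by
  decide

theorem psl27_orderOf_ne_six (g : PSL(2, ZMod 7)) : orderOf g ≠ 6 := by
  have : Fact (Nat.Prime 7) := ⟨by norm_num⟩
  obtain ⟨A, rfl⟩ := QuotientGroup.mk_surjective g
  have hpow (k : ℕ) := Matrix.ProjectiveSpecialLinearGroup.mk_pow_eq_one_iff A k
  intro h
  have h6 := pow_orderOf_eq_one (A : PSL(2, ZMod 7))
  rw [h, hpow] at h6
  rcases sl27_pow_two_or_pow_three_eq_one_or_neg_one_of_pow_six A h6 with h2 | h3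
  · have := orderOf_le_of_pow_eq_one two_pos ((hpow 2).mpr h2)
    omega
  · have := orderOf_le_of_pow_eq_one three_pos ((hpow 3).mpr h3)
    omega

/-- Every subgroup of order 12 of `PSL(2, F₇)` is isomorphic to the alternating group `A₄`. -/
theorem psl27_order12_iso_A4
    (K : Subgroup (Matrix.ProjectiveSpecialLinearGroup (Fin 2) (ZMod 7)))
    (hK : Nat.card K = 12) :
    Nonempty (K ≃* alternatingGroup (Fin 4)) :=
  nonempty_mulEquiv_alternatingGroup_of_card_eq_twelve hK fun g => by
    rw [← Subgroup.orderOf_coe]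
    exact psl27_orderOf_ne_six g
end
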